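/- arXiv:2603.05013 — 7 statements merged into one kernel-verified Lean document; each statement's English description precedes it below -/
import Mathlib

section
/- Let k>0, ε>0, θ₁∈(-π/2,π/2), and let θ̃∈ℝ² with |θ̃|=|sin θ₁|. For n∈ℤ², define β_n(k+iε) = √((k+iε)²cos²θ₁ − 2(k+iε)(n·θ̃) − |n|²), where the square root is the principal branch holomorphic on ℂ∖(i·ℝ_{≤0}) (with √t = i√|t| for t<0). Then inf{Im β_n(k+iε) : n∈ℤ²} > 0. -/
/-!
With `c = cos θ₁ > 0` and `a = n·θ̃`, the radicand is `ζ² - P` for `ζ = (k + iε)c - a/c` and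
`P = a²/c² + |n|² ≥ 0`. Any square root `s` of `ζ² - P` with `Im s ≥ 0` satisfies
`Im s ≥ Im ζ = ε c`: writing `s = x + iy`, `ζ = p + iq`, the real and imaginary parts of
`s² = ζ² - P` give `(p² + y²)(q² - y²) + P y² = 0`, which forces `y ≥ q`. The branch `cutSqrt`
has nonnegative imaginary part off the quadrant `{Re > 0, Im < 0}`, and since `k > 0` the
radicand never lies there. So `ε cos θ₁` is a uniform lower bound.
-/

open Complex Real

/-- The square root branch holomorphic on ℂ ∖ (i·ℝ_{≤0}): rotate to the
principal branch (cut on ℝ_{≤0}) by `z ↦ e^{iπ/4}·√(-iz)`.  For `t < 0`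
real this gives `i·√|t|`. -/
noncomputable def cutSqrt (z : ℂ) : ℂ :=
  Complex.exp (Real.pi * Complex.I / 4) * (-Complex.I * z) ^ ((1 : ℂ) / 2)

lemma cutSqrt_sq (z : ℂ) : cutSqrt z ^ 2 = z := by
  have hexp : exp (π * I / 4) ^ 2 = I := by
    rw [← Complex.exp_nat_mul]
    convert exp_pi_div_two_mul_I using 2
    push_cast
    ring
  have hroot : ((-I * z) ^ ((1 : ℂ) / 2)) ^ 2 = -I * z := by
    rw [one_div]
    exact cpow_ofNat_inv_pow _ 2
  rw [cutSqrt, mul_pow, hexp, hroot, ← mul_assoc, mul_neg, I_mul_I, neg_neg, one_mul]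

lemma im_cutSqrt (z : ℂ) :
    (cutSqrt z).im = √2 / 2 * (((-I * z) ^ (2⁻¹ : ℂ)).re + ((-I * z) ^ (2⁻¹ : ℂ)).im) := by
  have h : π * I / 4 = ((π / 4 : ℝ) : ℂ) * I := by push_cast; ring
  rw [cutSqrt, one_div, h, exp_mul_I, ← ofReal_cos, ← ofReal_sin, cos_pi_div_four,
    sin_pi_div_four]
  simp only [mul_im, add_re, add_im, ofReal_re, ofReal_im, mul_re, I_re, I_im]
  ring

lemma im_cutSqrt_nonneg {z : ℂ} (hz : z.re ≤ 0 ∨ 0 ≤ z.im) : 0 ≤ (cutSqrt z).im := by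
  rw [im_cutSqrt]
  set w := -I * z with hw
  refine mul_nonneg (by positivity) ?_
  rcases hz with hre | him
  · rw [cpow_inv_two_re, cpow_inv_two_im_eq_sqrt (by simpa [hw] using hre)]
    positivity
  · have hw_re : 0 ≤ w.re := by simpa [hw] using him
    have : |(w ^ (2⁻¹ : ℂ)).im| ≤ (w ^ (2⁻¹ : ℂ)).re := by
      rw [abs_cpow_inv_two_im, cpow_inv_two_re]
      gcongr
      linarith
    linarith [neg_abs_le (w ^ (2⁻¹ : ℂ)).im]

lemma im_le_im_of_sq_eq_sq_sub {s ζ : ℂ} {P : ℝ} (hP : 0 ≤ P) (hζ : 0 < ζ.im)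
    (hs : 0 ≤ s.im) (h : s ^ 2 = ζ ^ 2 - P) : ζ.im ≤ s.im := by
  have hre := congrArg re h
  have him := congrArg im h
  simp only [sq, mul_re, mul_im, sub_re, sub_im, ofReal_re, ofReal_im] at hre him
  have key : (ζ.re ^ 2 + s.im ^ 2) * (ζ.im ^ 2 - s.im ^ 2) + P * s.im ^ 2 = 0 := by
    linear_combination s.im ^ 2 * hre - (s.re * s.im + ζ.re * ζ.im) / 2 * him
  by_contra! hlt
  rcases hs.eq_or_lt with hy | hy
  · have hp : ζ.re = 0 := by
      rw [← hy] at him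
      nlinarith
    rw [← hy, hp] at hre
    nlinarith [sq_nonneg s.re]
  · nlinarith [mul_pos (by positivity : 0 < ζ.re ^ 2 + s.im ^ 2)
      (by nlinarith : 0 < ζ.im ^ 2 - s.im ^ 2), mul_nonneg hP (sq_nonneg s.im)]

/-- With `c = cos θ₁`, `a = n·θ̃` and `R = |n|²` this is the radicand of `β_n(k + iε)`. -/
noncomputable def betaSq (k ε c a R : ℝ) : ℂ :=
  ((k : ℂ) + ε * I) ^ 2 * (c : ℂ) ^ 2 - 2 * ((k : ℂ) + ε * I) * (a : ℂ) - (R : ℂ)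

section betaSq

variable {k ε c R : ℝ}

lemma betaSq_re (a : ℝ) : (betaSq k ε c a R).re = (k ^ 2 - ε ^ 2) * c ^ 2 - 2 * k * a - R := by
  simp only [betaSq, sq, sub_re, mul_re, mul_im, add_re, add_im, ofReal_re, ofReal_im, I_re, I_im,
    re_ofNat, im_ofNat]
  ring

lemma betaSq_im (a : ℝ) : (betaSq k ε c a R).im = 2 * ε * (k * c ^ 2 - a) := by
  simp only [betaSq, sq, sub_im, mul_re, mul_im, add_re, add_im, ofReal_re, ofReal_im, I_re, I_im,
    re_ofNat, im_ofNat]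
  ring

lemma betaSq_re_nonpos_or_im_nonneg (hk : 0 < k) (hε : 0 ≤ ε) (hR : 0 ≤ R) (a : ℝ) :
    (betaSq k ε c a R).re ≤ 0 ∨ 0 ≤ (betaSq k ε c a R).im := by
  rcases le_or_gt a (k * c ^ 2) with ha | ha
  · right
    rw [betaSq_im]
    have : 0 ≤ k * c ^ 2 - a := by linarith
    positivity
  · left
    rw [betaSq_re]
    nlinarith [mul_nonneg (sq_nonneg ε) (sq_nonneg c)]

lemma betaSq_eq_sq_sub (hc : c ≠ 0) (a : ℝ) :
    betaSq k ε c a R = (((k : ℂ) + ε * I) * c - (a / c : ℝ)) ^ 2 - ((a / c) ^ 2 + R : ℝ) := by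
  have : (c : ℂ) ≠ 0 := by exact_mod_cast hc
  rw [betaSq]
  push_cast
  field_simp
  ring

lemma mul_le_im_cutSqrt_betaSq (hk : 0 < k) (hε : 0 < ε) (hc : 0 < c) (hR : 0 ≤ R) (a : ℝ) :
    ε * c ≤ (cutSqrt (betaSq k ε c a R)).im := by
  set ζ : ℂ := ((k : ℂ) + ε * I) * c - (a / c : ℝ)
  have hζ : ζ.im = ε * c := by simp [ζ]
  rw [← hζ]
  exact im_le_im_of_sq_eq_sq_sub (P := (a / c) ^ 2 + R) (by positivity) (hζ ▸ by positivity)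
    (im_cutSqrt_nonneg (betaSq_re_nonpos_or_im_nonneg hk hε.le hR a))
    (by rw [cutSqrt_sq, betaSq_eq_sq_sub hc.ne'])

end betaSq

theorem inf_im_beta_pos_general (k ε θ₁ : ℝ) (hk : 0 < k) (hε : 0 < ε)
    (hθ₁ : θ₁ ∈ Set.Ioo (-(Real.pi / 2)) (Real.pi / 2))
    (θt : ℝ × ℝ)
    (β : ℤ × ℤ → ℂ)
    (hβ : ∀ n : ℤ × ℤ, β n =
      cutSqrt (((k : ℂ) + ε * Complex.I) ^ 2 * (Real.cos θ₁ : ℂ) ^ 2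
        - 2 * ((k : ℂ) + ε * Complex.I) * ((n.1 * θt.1 + n.2 * θt.2 : ℝ) : ℂ)
        - (((n.1 : ℝ) ^ 2 + (n.2 : ℝ) ^ 2 : ℝ) : ℂ))) :
    ∃ δ : ℝ, 0 < δ ∧ ∀ n : ℤ × ℤ, δ ≤ (β n).im := by
  have hc : 0 < Real.cos θ₁ := Real.cos_pos_of_mem_Ioo hθ₁
  refine ⟨ε * Real.cos θ₁, by positivity, fun n => ?_⟩
  rw [hβ n]
  exact mul_le_im_cutSqrt_betaSq hk hε hc (by positivity) _

/-- for `k, ε > 0`, `θ₁ ∈ (-π/2, π/2)` and `θ̃ ∈ ℝ²` with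
`|θ̃| = |sin θ₁|`, the imaginary parts of
`β_n(k+iε) = √((k+iε)²cos²θ₁ − 2(k+iε)(n·θ̃) − |n|²)`, `n ∈ ℤ²`, have a
positive lower bound. -/
theorem inf_im_beta_pos (k ε θ₁ : ℝ) (hk : 0 < k) (hε : 0 < ε)
    (hθ₁ : θ₁ ∈ Set.Ioo (-(Real.pi / 2)) (Real.pi / 2))
    (θt : ℝ × ℝ) (hθt : Real.sqrt (θt.1 ^ 2 + θt.2 ^ 2) = |Real.sin θ₁|)
    (β : ℤ × ℤ → ℂ)
    (hβ : ∀ n : ℤ × ℤ, β n =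
      cutSqrt (((k : ℂ) + ε * Complex.I) ^ 2 * (Real.cos θ₁ : ℂ) ^ 2
        - 2 * ((k : ℂ) + ε * Complex.I) * ((n.1 * θt.1 + n.2 * θt.2 : ℝ) : ℂ)
        - (((n.1 : ℝ) ^ 2 + (n.2 : ℝ) ^ 2 : ℝ) : ℂ))) :
    ∃ δ : ℝ, 0 < δ ∧ ∀ n : ℤ × ℤ, δ ≤ (β n).im :=
  inf_im_beta_pos_general k ε θ₁ hk hε hθ₁ θt β hβ
end

section
/- Let k>0, ε>0, θ₁∈(-π/2,π/2), θ̃∈ℝ² with |θ̃|=|sin θ₁|, and n∈ℤ². Write z_n := (k+iε)²cos²θ₁ − 2(k+iε)(n·θ̃) − |n|². If Re z_n ≥ 0, then Im z_n > 0. -/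
open Complex Real

/-!
For `w = k + iε` and real `c, a, N` put `z = w²c² − 2wa − N`; then `Re z = (k² − ε²)c² − 2ka − N`
and `Im z = 2ε(kc² − a)`. If `Re z ≥ 0` then `2ka ≤ (k² − ε²)c² − N < k²c²`, so `a < kc²/2 < kc²`
and `Im z > 0`.
-/

namespace Complex

theorem re_sq_mul_sub_mul_sub (w : ℂ) (c a N : ℝ) :
    (w ^ 2 * (c : ℂ) ^ 2 - 2 * w * a - N).re = (w.re ^ 2 - w.im ^ 2) * c ^ 2 - 2 * w.re * a - N := by
  simp [pow_two]

theorem im_sq_mul_sub_mul_sub (w : ℂ) (c a N : ℝ) :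
    (w ^ 2 * (c : ℂ) ^ 2 - 2 * w * a - N).im = 2 * w.im * (w.re * c ^ 2 - a) := by
  simp [pow_two]
  ring

theorem im_sq_mul_sub_mul_sub_pos {w : ℂ} (hre : 0 < w.re) (him : 0 < w.im) {c : ℝ} (hc : c ≠ 0)
    (a : ℝ) {N : ℝ} (hN : 0 ≤ N) (h : 0 ≤ (w ^ 2 * (c : ℂ) ^ 2 - 2 * w * a - N).re) :
    0 < (w ^ 2 * (c : ℂ) ^ 2 - 2 * w * a - N).im := by
  rw [re_sq_mul_sub_mul_sub] at h
  rw [im_sq_mul_sub_mul_sub]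
  have hc2 : 0 < c ^ 2 := by positivity
  have h2a : 2 * w.re * a < w.re * (w.re * c ^ 2) := by nlinarith [mul_pos him him]
  have ha : a < w.re * c ^ 2 := by nlinarith [mul_pos hre hc2]
  exact mul_pos (by positivity) (sub_pos.mpr ha)

end Complex

theorem im_zn_pos_of_re_nonneg_general (k ε θ₁ : ℝ) (hk : 0 < k) (hε : 0 < ε)
    (hθ₁ : θ₁ ∈ Set.Ioo (-(Real.pi / 2)) (Real.pi / 2))
    (θt : ℝ × ℝ)
    (n : ℤ × ℤ)
    (z : ℂ)
    (hz : z = ((k : ℂ) + ε * Complex.I) ^ 2 * (Real.cos θ₁ : ℂ) ^ 2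
        - 2 * ((k : ℂ) + ε * Complex.I) * ((n.1 * θt.1 + n.2 * θt.2 : ℝ) : ℂ)
        - (((n.1 : ℝ) ^ 2 + (n.2 : ℝ) ^ 2 : ℝ) : ℂ))
    (hre : 0 ≤ z.re) : 0 < z.im := by
  subst hz
  exact im_sq_mul_sub_mul_sub_pos (by simpa using hk) (by simpa using hε)
    (cos_pos_of_mem_Ioo hθ₁).ne' _ (by positivity) hre

/-- with `z_n = (k+iε)²cos²θ₁ − 2(k+iε)(n·θ̃) − |n|²`, if
`Re z_n ≥ 0` then `Im z_n > 0`. -/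
theorem im_zn_pos_of_re_nonneg (k ε θ₁ : ℝ) (hk : 0 < k) (hε : 0 < ε)
    (hθ₁ : θ₁ ∈ Set.Ioo (-(Real.pi / 2)) (Real.pi / 2))
    (θt : ℝ × ℝ) (hθt : Real.sqrt (θt.1 ^ 2 + θt.2 ^ 2) = |Real.sin θ₁|)
    (n : ℤ × ℤ)
    (z : ℂ)
    (hz : z = ((k : ℂ) + ε * Complex.I) ^ 2 * (Real.cos θ₁ : ℂ) ^ 2
        - 2 * ((k : ℂ) + ε * Complex.I) * ((n.1 * θt.1 + n.2 * θt.2 : ℝ) : ℂ)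
        - (((n.1 : ℝ) ^ 2 + (n.2 : ℝ) ^ 2 : ℝ) : ℂ))
    (hre : 0 ≤ z.re) : 0 < z.im :=
  im_zn_pos_of_re_nonneg_general k ε θ₁ hk hε hθ₁ θt n z hz hre
end

section
/- Let H be a Hilbert space and A, B, C : H → H bounded self-adjoint operators with A positive definite (⟨Av,v⟩ > 0 for all v ≠ 0) and C non-negative. Suppose k ∈ ℂ with Im k > 0 and v ∈ H satisfies Av − kBv − k²Cv = 0. Then v = 0. -/
open scoped InnerProductSpace ComplexConjugate

/-!
Pair the equation with `v`: by self-adjointness `a = ⟪A v, v⟫`, `b = ⟪B v, v⟫`, `c = ⟪C v, v⟫` are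
real, and `z = conj k` is a root of `a - z b - z² c`. Dividing by `z`, `b = a z⁻¹ - z c`; the right
side has imaginary part `-(Im z) (a / |z|² + c)`, which is nonzero when `a > 0`, `c ≥ 0`,
`Im z ≠ 0`, while `b` is real.
-/

theorem Complex.ofReal_sub_mul_sub_sq_mul_ne_zero {a b c : ℝ} (ha : 0 < a) (hc : 0 ≤ c)
    {z : ℂ} (hz : z.im ≠ 0) : (a : ℂ) - z * b - z ^ 2 * c ≠ 0 := by
  intro h
  have hz0 : z ≠ 0 := fun h0 => hz (by simp [h0])
  have hb : (b : ℂ) = a * z⁻¹ - z * c := by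
    field_simp
    linear_combination -h
  have him : z.im * (a / Complex.normSq z + c) = 0 := by
    have := congrArg Complex.im hb
    simp only [Complex.ofReal_im, Complex.inv_im, Complex.sub_im, Complex.mul_im,
      Complex.ofReal_re] at this
    linear_combination this
  have hpos : 0 < a / Complex.normSq z + c := by
    have := Complex.normSq_pos.mpr hz0
    positivity
  exact mul_ne_zero hz hpos.ne' him

theorem IsSelfAdjoint.ofReal_re_inner_apply_self {H : Type*} [NormedAddCommGroup H]
    [InnerProductSpace ℂ H] [CompleteSpace H] {T : H →L[ℂ] H} (hT : IsSelfAdjoint T) (v : H) :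
    ((⟪T v, v⟫_ℂ).re : ℂ) = ⟪T v, v⟫_ℂ :=
  hT.isSymmetric.coe_re_inner_apply_self v

/-- if `A, B, C` are bounded self-adjoint operators on a Hilbert
space, `A` positive definite, `C` non-negative, and `Av − kBv − k²Cv = 0` with
`Im k > 0`, then `v = 0`. -/
theorem quadratic_pencil_no_eigen_im_pos
    {H : Type*} [NormedAddCommGroup H] [InnerProductSpace ℂ H] [CompleteSpace H]
    (A B C : H →L[ℂ] H)
    (hA : IsSelfAdjoint A) (hB : IsSelfAdjoint B) (hC : IsSelfAdjoint C)
    (hApos : ∀ v : H, v ≠ 0 → 0 < (⟪A v, v⟫_ℂ).re)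
    (hCnonneg : ∀ v : H, 0 ≤ (⟪C v, v⟫_ℂ).re)
    (k : ℂ) (hk : 0 < k.im)
    (v : H) (hv : A v - k • B v - k ^ 2 • C v = 0) : v = 0 := by
  by_contra hv0
  have hpair : ⟪A v, v⟫_ℂ - conj k * ⟪B v, v⟫_ℂ - conj k ^ 2 * ⟪C v, v⟫_ℂ = 0 := by
    simpa only [inner_sub_left, inner_smul_left, map_pow, inner_zero_left] using
      congrArg (⟪·, v⟫_ℂ) hv
  rw [← hA.ofReal_re_inner_apply_self, ← hB.ofReal_re_inner_apply_self,
    ← hC.ofReal_re_inner_apply_self] at hpair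
  refine Complex.ofReal_sub_mul_sub_sq_mul_ne_zero (hApos v hv0) (hCnonneg v) ?_ hpair
  simpa only [Complex.conj_im, neg_ne_zero] using hk.ne'
end

section
/- Let γ ∈ ℝ, γ ≠ 0, and β > 0. Consider the 4×4 complex matrix M with rows (1, 0, −e^{iγ'}, −e^{−iγ'}), (0, 1, −e^{−iγ'}, −e^{iγ'}), (−β, 0, −iγ' e^{iγ'}, iγ' e^{−iγ'}), (0, β, iγ' e^{−iγ'}, −iγ' e^{iγ'}) where γ' = i|γ| is purely imaginary (so e^{iγ'} = e^{−|γ|}). Then det M = (e^{−2|γ|} − e^{2|γ|})(β² + γ²)·(a positive constant) ≠ 0; in particular, when β = |β_n| > 0 and γ'² = k²q₀ − |α_n|² < 0 with β² = |α_n|² − k² and the relation β² + |γ|² = k²(1−q₀) > 0, det M = (e^{−2|γ|} − e^{2|γ|})·k²(1−q₀) < 0. -/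
open Complex

/-! Eliminating the first two unknowns (a Schur complement of the identity block) leaves the
2×2 determinant of `[[-(t + b) e, (t - b) f], [(t + b) f, (b - t) e]]`, which factors as
`(t² - b²)(e² - f²)`. For `γ' = i|γ|` all entries are real: `t = iγ' = -|γ|`, `e = e^{-|γ|}`,
`f = e^{|γ|}`, and `e² - f² < 0` as soon as `γ ≠ 0`. -/

theorem det_slabMatchingMatrix {R : Type*} [CommRing R] (b t e f : R) :
    (Matrix.of ![![1, 0, -e, -f], ![0, 1, -f, -e], ![-b, 0, -t * e, t * f],
      ![0, b, t * f, -t * e]]).det = (t ^ 2 - b ^ 2) * (e ^ 2 - f ^ 2) := by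
  simp [Matrix.det_succ_row_zero, Fin.sum_univ_succ, Fin.succAbove]
  ring

theorem slab_matching_determinant_general (γ β : ℝ) (hγ : γ ≠ 0)
    (g : ℝ) (hg : g = |γ|)
    (γ' : ℂ) (hγ' : γ' = Complex.I * (g : ℂ))
    (M : Matrix (Fin 4) (Fin 4) ℂ)
    (hM : M = Matrix.of
      ![![1, 0, -Complex.exp (Complex.I * γ'), -Complex.exp (-(Complex.I * γ'))],
        ![0, 1, -Complex.exp (-(Complex.I * γ')), -Complex.exp (Complex.I * γ')],
        ![-(β : ℂ), 0, -(Complex.I * γ') * Complex.exp (Complex.I * γ'),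
          (Complex.I * γ') * Complex.exp (-(Complex.I * γ'))],
        ![0, (β : ℂ), (Complex.I * γ') * Complex.exp (-(Complex.I * γ')),
          -(Complex.I * γ') * Complex.exp (Complex.I * γ')]]) :
    M.det = (((Real.exp (-(2 * g)) - Real.exp (2 * g)) * (g ^ 2 - β ^ 2) : ℝ) : ℂ) ∧
    ∀ k q₀ : ℝ, 0 < k → 0 < q₀ → q₀ < 1 → g ^ 2 - β ^ 2 = k ^ 2 * (1 - q₀) →
      M.det = (((Real.exp (-(2 * g)) - Real.exp (2 * g)) * (k ^ 2 * (1 - q₀)) : ℝ) : ℂ) ∧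
      M.det.re < 0 ∧ M.det ≠ 0 := by
  have hIγ' : Complex.I * γ' = ((-g : ℝ) : ℂ) := by
    rw [hγ', ← mul_assoc, Complex.I_mul_I]
    push_cast
    ring
  have hdet : M.det = (((Real.exp (-(2 * g)) - Real.exp (2 * g)) * (g ^ 2 - β ^ 2) : ℝ) : ℂ) := by
    rw [hM, det_slabMatchingMatrix, hIγ', ← exp_nat_mul, ← exp_nat_mul]
    push_cast
    ring_nf
  have hexp : Real.exp (-(2 * g)) - Real.exp (2 * g) < 0 := by
    have hg_pos : 0 < g := hg ▸ abs_pos.mpr hγ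
    linarith [Real.exp_lt_exp.mpr (show -(2 * g) < 2 * g by linarith)]
  refine ⟨hdet, fun k q₀ hk _ hq₀ hrel => ?_⟩
  have hneg : (Real.exp (-(2 * g)) - Real.exp (2 * g)) * (k ^ 2 * (1 - q₀)) < 0 :=
    mul_neg_of_neg_of_pos hexp (by have := sub_pos.mpr hq₀; positivity)
  rw [hdet, hrel, ofReal_re]
  exact ⟨rfl, hneg, ofReal_ne_zero.mpr hneg.ne⟩

/-- the 4×4 matching matrix for a guided-wave ansatz in a slab.
With `γ' = i|γ|` (so `e^{iγ'} = e^{−|γ|}`) and `β > 0`, its determinant equals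
`(e^{−2|γ|} − e^{2|γ|})(|γ|² − β²)`; in particular, under the slab relation
`|γ|² − β² = k²(1−q₀) > 0` (with `k > 0`, `0 < q₀ < 1`) the determinant is
`(e^{−2|γ|} − e^{2|γ|})·k²(1−q₀) < 0`, hence nonzero. -/
theorem slab_matching_determinant (γ β : ℝ) (hγ : γ ≠ 0) (hβ : 0 < β)
    (g : ℝ) (hg : g = |γ|)
    (γ' : ℂ) (hγ' : γ' = Complex.I * (g : ℂ))
    (M : Matrix (Fin 4) (Fin 4) ℂ)
    (hM : M = Matrix.of
      ![![1, 0, -Complex.exp (Complex.I * γ'), -Complex.exp (-(Complex.I * γ'))],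
        ![0, 1, -Complex.exp (-(Complex.I * γ')), -Complex.exp (Complex.I * γ')],
        ![-(β : ℂ), 0, -(Complex.I * γ') * Complex.exp (Complex.I * γ'),
          (Complex.I * γ') * Complex.exp (-(Complex.I * γ'))],
        ![0, (β : ℂ), (Complex.I * γ') * Complex.exp (-(Complex.I * γ')),
          -(Complex.I * γ') * Complex.exp (Complex.I * γ')]]) :
    M.det = (((Real.exp (-(2 * g)) - Real.exp (2 * g)) * (g ^ 2 - β ^ 2) : ℝ) : ℂ) ∧
    ∀ k q₀ : ℝ, 0 < k → 0 < q₀ → q₀ < 1 → g ^ 2 - β ^ 2 = k ^ 2 * (1 - q₀) →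
      M.det = (((Real.exp (-(2 * g)) - Real.exp (2 * g)) * (k ^ 2 * (1 - q₀)) : ℝ) : ℂ) ∧
      M.det.re < 0 ∧ M.det ≠ 0 :=
  slab_matching_determinant_general γ β hγ g hg γ' hγ' M hM
end

section
/- Let X be a Hilbert space, ε₀ > 0, and L : [0,ε₀) → B(X) a continuously differentiable family of Fredholm operators such that L(ε) is invertible for ε ∈ (0,ε₀), L(0) has Riesz number one (N(L(0)²) = N(L(0))), and f : [0,ε₀) → X continuously differentiable with f(ε) ∈ R(L(ε)) for all ε. Let P be the projection onto N := N(L(0)) along the direct sum X = N ⊕ R(L(0)), and assume PL'(0)|_N : N → N is an isomorphism. Then v(ε) := L(ε)⁻¹f(ε) extends continuously to ε = 0, and v(0) is the unique solution of the system L(0)v(0) = f(0), PL'(0)v(0) = Pf'(0). -/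
/-!
Riesz number one says `N ∩ R = 0`, where `N = ker L(0)` and `R = range L(0)`. Since `L(0)` is
bounded below on `Nᗮ` and is a norm limit of invertible operators `S = L(ε)`, the map
`w ↦ proj_N (S⁻¹ w)` is injective on `Rᗮ` for `S` close to `L(0)`; so `codim R ≤ dim N` and
`X = N ⊕ R`. This makes `L(0) + P L'(0)` invertible, with `PL'(0)|_N` supplying the `N`-component.

For `ε ≠ 0`, applying the invertible operator `1 - P + ε⁻¹ P` turns `L(ε) v = f(ε)` into
`M(ε) v = g(ε)`, where `M(ε) = (1 - P) L(ε) + P (L(ε) - L(0)) / ε` and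
`g(ε) = (1 - P) f(ε) + P (f(ε) - f(0)) / ε` (using `P L(0) = 0` and `P f(0) = 0`). Both extend
continuously to `ε = 0` by `M(0) = L(0) + P L'(0)` and `g(0) = f(0) + P f'(0)`, so
`v(ε) = M(ε)⁻¹ g(ε)` is continuous on `[0, ε₀)`, and splitting `M(0) v(0) = g(0)` along `N ⊕ R`
gives the two equations for `v(0)`.
-/

open Function Set Topology
open scoped NNReal InnerProductSpace

theorem IsIdempotentElem.isUnit_one_sub_add_smul {𝕜 A : Type*} [Field 𝕜] [Ring A] [Algebra 𝕜 A]
    {p : A} (hp : IsIdempotentElem p) {c : 𝕜} (hc : c ≠ 0) : IsUnit (1 - p + c • p) := by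
  have key : ∀ {a b : 𝕜}, a * b = 1 → (1 - p + a • p) * (1 - p + b • p) = 1 := by
    intro a b hab
    simp only [mul_add, add_mul, mul_sub, sub_mul, mul_smul_comm, smul_mul_assoc, hp.eq, one_mul,
      mul_one]
    linear_combination (norm := module) hab • p
  exact ⟨⟨_, _, key (mul_inv_cancel₀ hc), key (inv_mul_cancel₀ hc)⟩, rfl⟩

section LinearAlgebra

variable {R M : Type*} [Ring R] [AddCommGroup M] [Module R M]

theorem LinearMap.disjoint_ker_range_of_ker_comp_self {T : M →ₗ[R] M}
    (hT : LinearMap.ker (T ∘ₗ T) = LinearMap.ker T) :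
    Disjoint (LinearMap.ker T) (LinearMap.range T) := by
  rw [Submodule.disjoint_def]
  rintro _ hx ⟨y, rfl⟩
  rw [← LinearMap.mem_ker, ← hT]
  exact hx

variable {T D P : M →ₗ[R] M}

theorem LinearMap.apply_add_apply_eq_add_apply_iff
    (hTP : Disjoint (LinearMap.ker T) (LinearMap.range T)) (hPN : ∀ x, P x ∈ LinearMap.ker T)
    {a b x : M} (ha : a ∈ LinearMap.range T) :
    T x + P (D x) = a + P b ↔ T x = a ∧ P (D x) = P b := by
  refine ⟨fun h => ?_, fun ⟨h₁, h₂⟩ => by rw [h₁, h₂]⟩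
  have hdiff : T x - a = P b - P (D x) := by rw [sub_eq_sub_iff_add_eq_add, h, add_comm]
  have hzero : T x - a = 0 := Submodule.disjoint_def.1 hTP _
    (hdiff ▸ sub_mem (hPN b) (hPN _)) (sub_mem ⟨x, rfl⟩ ha)
  rw [hzero, eq_comm, sub_eq_zero] at hdiff
  exact ⟨sub_eq_zero.1 hzero, hdiff.symm⟩

theorem LinearMap.bijective_add_comp (hTP : IsCompl (LinearMap.ker T) (LinearMap.range T))
    (hPN : ∀ x, P x ∈ LinearMap.ker T)
    (hD : ∀ y ∈ LinearMap.ker T, ∃! x, x ∈ LinearMap.ker T ∧ P (D x) = y) :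
    Bijective (T + P ∘ₗ D) := by
  refine ⟨(injective_iff_map_eq_zero _).2 fun x hx => ?_, fun y => ?_⟩
  · obtain ⟨hTx, hPDx⟩ := (apply_add_apply_eq_add_apply_iff hTP.disjoint hPN (zero_mem _)).1
      (by simpa using hx : T x + P (D x) = 0 + P 0)
    obtain ⟨z, -, hz⟩ := hD 0 (zero_mem _)
    rw [map_zero] at hPDx
    exact (hz x ⟨hTx, hPDx⟩).trans (hz 0 ⟨map_zero T, by simp⟩).symm
  · obtain ⟨n, hn, r, ⟨x, rfl⟩, rfl⟩ :=
      Submodule.mem_sup.1 (hTP.sup_eq_top ▸ Submodule.mem_top (x := y))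
    obtain ⟨z, ⟨hz, hPDz⟩, -⟩ := hD (n - P (D x)) (sub_mem hn (hPN _))
    refine ⟨x + z, ?_⟩
    rw [LinearMap.mem_ker] at hz
    simp only [LinearMap.add_apply, LinearMap.comp_apply, map_add, hz, hPDz]
    abel

theorem Submodule.isCompl_of_disjoint_of_finrank_quotient_le {K V : Type*} [DivisionRing K]
    [AddCommGroup V] [Module K V] {p q : Submodule K V} [FiniteDimensional K p]
    [FiniteDimensional K (V ⧸ q)] (h : Disjoint p q)
    (hle : Module.finrank K (V ⧸ q) ≤ Module.finrank K p) : IsCompl p q := by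
  have hinj : Injective (q.mkQ ∘ₗ p.subtype) := by
    rw [← LinearMap.ker_eq_bot, LinearMap.ker_comp, Submodule.ker_mkQ,
      ← Submodule.disjoint_iff_comap_eq_bot]
    exact h
  have hsurj := (LinearMap.injective_iff_surjective_of_finrank_eq_finrank
    (le_antisymm (LinearMap.finrank_le_finrank_of_injective hinj) hle)).1 hinj
  refine ⟨h, codisjoint_iff.2 ?_⟩
  rw [sup_comm, ← Submodule.map_mkQ_eq_top, ← Submodule.range_subtype p, ← LinearMap.range_comp]
  exact LinearMap.range_eq_top.2 hsurj

end LinearAlgebra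

section Hilbert

variable {𝕜 E : Type*} [RCLike 𝕜] [NormedAddCommGroup E] [InnerProductSpace 𝕜 E]

theorem ContinuousLinearMap.eq_zero_of_apply_mem_orthogonal_range {T S : E →L[𝕜] E}
    {K : Submodule 𝕜 E} {C : ℝ≥0} (hK : ∀ x ∈ K, ‖x‖ ≤ C * ‖T x‖) (hST : C * ‖S - T‖ < 1)
    {x : E} (hx : x ∈ K) (hSx : S x ∈ T.rangeᗮ) : x = 0 := by
  have horth : ⟪S x, -T x⟫_𝕜 = 0 := by
    rw [inner_neg_right, neg_eq_zero, inner_eq_zero_symm]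
    exact (Submodule.mem_orthogonal _ _).1 hSx _ ⟨x, rfl⟩
  have hpyth : ‖(S - T) x‖ * ‖(S - T) x‖ = ‖S x‖ * ‖S x‖ + ‖T x‖ * ‖T x‖ := by
    rw [sub_apply, sub_eq_add_neg, norm_add_sq_eq_norm_sq_add_norm_sq_of_inner_eq_zero _ _ horth,
      norm_neg]
  have hTx : ‖T x‖ ≤ C * ‖S - T‖ * ‖T x‖ := calc
    ‖T x‖ ≤ ‖(S - T) x‖ := by
      nlinarith [norm_nonneg (T x), norm_nonneg ((S - T) x), mul_self_nonneg ‖S x‖]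
    _ ≤ ‖S - T‖ * ‖x‖ := (S - T).le_opNorm x
    _ ≤ ‖S - T‖ * (C * ‖T x‖) := by gcongr; exact hK x hx
    _ = C * ‖S - T‖ * ‖T x‖ := by ring
  have hTx0 : ‖T x‖ = 0 := by nlinarith [norm_nonneg (T x)]
  simpa [hTx0] using hK x hx

variable [CompleteSpace E]

theorem ContinuousLinearMap.exists_norm_le_mul_norm_apply_of_mem_orthogonal_ker
    {F : Type*} [NormedAddCommGroup F] [NormedSpace 𝕜 F] [CompleteSpace F] (T : E →L[𝕜] F)
    (hT : IsClosed (T.range : Set F)) :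
    ∃ C : ℝ≥0, ∀ x ∈ T.kerᗮ, ‖x‖ ≤ C * ‖T x‖ := by
  have hinj : Injective (T ∘L T.kerᗮ.subtypeL) := by
    refine (injective_iff_map_eq_zero _).2 fun x hx => Subtype.ext ?_
    exact (Submodule.inf_orthogonal_eq_bot T.ker ▸ ⟨hx, x.2⟩ : (x : E) ∈ (⊥ : Submodule 𝕜 E))
  have hrange : Set.range (T ∘L T.kerᗮ.subtypeL) = T.range := by
    refine Subset.antisymm (range_subset_iff.2 fun x => ⟨x, rfl⟩) ?_
    rintro _ ⟨x, rfl⟩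
    refine ⟨⟨x - T.ker.starProjection x, T.ker.sub_starProjection_mem_orthogonal x⟩, ?_⟩
    have hker : T (T.ker.starProjection x) = 0 := T.ker.starProjection_apply_mem x
    simp [hker]
  obtain ⟨C, hC⟩ := (T ∘L T.kerᗮ.subtypeL).antilipschitz_of_injective_of_isClosed_range
    hinj (hrange ▸ hT)
  exact ⟨C, fun x hx => hC.le_mul_norm (map_zero _) ⟨x, hx⟩⟩

theorem ContinuousLinearMap.finrank_quotient_range_le_finrank_ker_of_mem_closure_isUnit
    {T : E →L[𝕜] E} (hT : IsClosed (T.range : Set E)) [FiniteDimensional 𝕜 T.ker]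
    (hTu : T ∈ closure {S : E →L[𝕜] E | IsUnit S}) :
    Module.finrank 𝕜 (E ⧸ T.range) ≤ Module.finrank 𝕜 T.ker := by
  obtain ⟨C, hC⟩ := T.exists_norm_le_mul_norm_apply_of_mem_orthogonal_ker hT
  obtain ⟨_, ⟨u, rfl⟩, hu⟩ := Metric.mem_closure_iff.1 hTu ((C : ℝ) + 1)⁻¹ (by positivity)
  have hCu : C * ‖(u : E →L[𝕜] E) - T‖ < 1 := by
    rw [dist_eq_norm'] at hu
    calc (C : ℝ) * ‖(u : E →L[𝕜] E) - T‖ ≤ ((C : ℝ) + 1) * ‖(u : E →L[𝕜] E) - T‖ := by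
          gcongr; linarith
      _ < ((C : ℝ) + 1) * ((C : ℝ) + 1)⁻¹ := by gcongr
      _ = 1 := mul_inv_cancel₀ (by positivity)
  have : CompleteSpace T.range := hT.completeSpace_coe
  rw [(T.range.quotientEquivOfIsCompl _ T.range.isCompl_orthogonal).finrank_eq]
  let φ : T.rangeᗮ →ₗ[𝕜] T.ker := T.ker.orthogonalProjectionOnto.toLinearMap ∘ₗ
    (↑u⁻¹ : E →L[𝕜] E).toLinearMap ∘ₗ T.rangeᗮ.subtype
  refine LinearMap.finrank_le_finrank_of_injective (f := φ)
    ((injective_iff_map_eq_zero φ).2 fun w hw => ?_)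
  have hx : (↑u⁻¹ : E →L[𝕜] E) w ∈ T.kerᗮ := by simpa [φ] using hw
  have huw : (u : E →L[𝕜] E) ((↑u⁻¹ : E →L[𝕜] E) w) = w := by
    rw [← mul_apply_eq_comp, Units.mul_inv, one_apply_eq_self]
  have := T.eq_zero_of_apply_mem_orthogonal_range hC hCu hx (by rw [huw]; exact w.2)
  rw [this, map_zero] at huw
  exact Subtype.ext huw.symm

end Hilbert

section RingInverse

variable {𝕜 E : Type*} [NontriviallyNormedField 𝕜] [NormedAddCommGroup E] [NormedSpace 𝕜 E]

theorem IsUnit.apply_ring_inverse_apply {T : E →L[𝕜] E} (hT : IsUnit T) (y : E) :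
    T (Ring.inverse T y) = y := by
  rw [← mul_apply_eq_comp, Ring.mul_inverse_cancel _ hT, one_apply_eq_self]

theorem ContinuousOn.ring_inverse_apply [CompleteSpace E] {α : Type*} [TopologicalSpace α]
    {M : α → E →L[𝕜] E} {g : α → E} {s : Set α} (hM : ContinuousOn M s)
    (hMu : ∀ x ∈ s, IsUnit (M x)) (hg : ContinuousOn g s) :
    ContinuousOn (fun x => Ring.inverse (M x) (g x)) s := by
  refine ContinuousOn.clm_apply (fun x hx => ?_) hg
  have := NormedRing.inverse_continuousAt (hMu x hx).unit
  rw [IsUnit.unit_spec] at this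
  exact this.comp_continuousWithinAt (hM x hx)

end RingInverse

section BlowUp

variable {𝕜 F : Type*} [NontriviallyNormedField 𝕜] [NormedAddCommGroup F] [NormedSpace 𝕜 F]

theorem continuousOn_update_slope [DecidableEq 𝕜] {g : 𝕜 → F} {g' : F} {s : Set 𝕜} {a : 𝕜}
    (hg : ContinuousOn g s) (hga : HasDerivWithinAt g g' s a) :
    ContinuousOn (update (slope g a) a g') s := by
  intro x hx
  rcases eq_or_ne x a with rfl | hxa
  · exact continuousWithinAt_update_same.2 (hasDerivWithinAt_iff_tendsto_slope.1 hga)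
  · rw [continuousWithinAt_update_of_ne hxa]
    exact ((continuousWithinAt_id.sub continuousWithinAt_const).inv₀ (sub_ne_zero.2 hxa)).smul
      ((hg x hx).sub continuousWithinAt_const)

open scoped Classical in
noncomputable def blowUp (π : F →L[𝕜] F) (g : 𝕜 → F) (g' : F) (ε : 𝕜) : F :=
  g ε - π (g ε) + π (update (slope g 0) 0 g' ε)

variable {π : F →L[𝕜] F} {g : 𝕜 → F} {g' : F}

theorem continuousOn_blowUp {s : Set 𝕜} (hg : ContinuousOn g s)
    (hg0 : HasDerivWithinAt g g' s 0) : ContinuousOn (blowUp π g g') s := by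
  classical
  exact (hg.sub (π.continuous.comp_continuousOn hg)).add
    (π.continuous.comp_continuousOn (continuousOn_update_slope hg hg0))

theorem blowUp_zero : blowUp π g g' 0 = g 0 - π (g 0) + π g' := by
  classical
  simp [blowUp]

theorem blowUp_of_ne (h0 : π (g 0) = 0) {ε : 𝕜} (hε : ε ≠ 0) :
    blowUp π g g' ε = g ε - π (g ε) + ε⁻¹ • π (g ε) := by
  classical
  simp [blowUp, update_of_ne hε, slope_def_module, h0]

end BlowUp

theorem exists_continuousOn_solution_of_isUnit {E : Type*} [NormedAddCommGroup E]
    [NormedSpace ℂ E] [CompleteSpace E] {L : ℝ → E →L[ℂ] E} {L' : E →L[ℂ] E}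
    {f : ℝ → E} {f' : E} {s : Set ℝ} {P : E →L[ℂ] E} (h0 : (0 : ℝ) ∈ s)
    (hL : ContinuousOn L s) (hL0 : HasDerivWithinAt L L' s 0)
    (hf : ContinuousOn f s) (hf0 : HasDerivWithinAt f f' s 0)
    (hP : IsIdempotentElem P) (hPL : P * L 0 = 0) (hPf : P (f 0) = 0)
    (hLu : ∀ ε ∈ s, ε ≠ 0 → IsUnit (L ε)) (hM0 : IsUnit (L 0 + P * L')) :
    ∃ v : ℝ → E, ContinuousOn v s ∧ (∀ ε ∈ s, ε ≠ 0 → L ε (v ε) = f ε) ∧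
      L 0 (v 0) + P (L' (v 0)) = f 0 + P f' := by
  set M := blowUp ((ContinuousLinearMap.mul ℂ (E →L[ℂ] E) P).restrictScalars ℝ) L L' with hMdef
  set g := blowUp (P.restrictScalars ℝ) f f' with hgdef
  have hQ : ∀ ε : ℝ, ε ≠ 0 → IsUnit (1 - P + ε⁻¹ • P) := fun ε hε =>
    hP.isUnit_one_sub_add_smul (inv_ne_zero hε)
  have hM : ∀ ε : ℝ, ε ≠ 0 → M ε = (1 - P + ε⁻¹ • P) * L ε := fun ε hε => by
    rw [hMdef, blowUp_of_ne (by simpa using hPL) hε]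
    simp [sub_mul, add_mul]
  have hg : ∀ ε : ℝ, ε ≠ 0 → g ε = (1 - P + ε⁻¹ • P) (f ε) := fun ε hε => by
    rw [hgdef, blowUp_of_ne hPf hε]
    simp
  have hMu : ∀ ε ∈ s, IsUnit (M ε) := by
    intro ε hε
    rcases eq_or_ne ε 0 with rfl | hε0
    · simpa [M, blowUp_zero, hPL] using hM0
    · rw [hM ε hε0]
      exact (hQ ε hε0).mul (hLu ε hε hε0)
  refine ⟨fun ε => Ring.inverse (M ε) (g ε),
    (continuousOn_blowUp hL hL0).ring_inverse_apply hMu (continuousOn_blowUp hf hf0),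
    fun ε hε hε0 => ?_, ?_⟩
  · refine (ContinuousLinearMap.isUnit_iff_bijective.1 (hQ ε hε0)).1 ?_
    rw [← mul_apply_eq_comp, ← hM ε hε0, ← hg ε hε0]
    exact (hMu ε hε).apply_ring_inverse_apply _
  · simpa [M, g, blowUp_zero, hPL, hPf] using (hMu 0 h0).apply_ring_inverse_apply (g 0)

theorem singular_perturbation_lemma_general
    {X : Type*} [NormedAddCommGroup X] [InnerProductSpace ℂ X] [CompleteSpace X]
    (ε₀ : ℝ) (hε₀ : 0 < ε₀)
    (L L' : ℝ → X →L[ℂ] X) (f f' : ℝ → X)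
    -- continuous differentiability on [0, ε₀)
    (hLderiv : ∀ ε ∈ Set.Ico (0 : ℝ) ε₀, HasDerivWithinAt L (L' ε) (Set.Ico 0 ε₀) ε)
    (hfderiv : ∀ ε ∈ Set.Ico (0 : ℝ) ε₀, HasDerivWithinAt f (f' ε) (Set.Ico 0 ε₀) ε)
    -- each L(ε) is Fredholm
    (hFred : ∀ ε ∈ Set.Ico (0 : ℝ) ε₀,
      FiniteDimensional ℂ (LinearMap.ker (L ε : X →ₗ[ℂ] X)) ∧
      IsClosed (LinearMap.range (L ε : X →ₗ[ℂ] X) : Set X) ∧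
      FiniteDimensional ℂ (X ⧸ LinearMap.range ((L ε) : X →ₗ[ℂ] X)))
    -- invertibility for ε ∈ (0, ε₀)
    (hinv : ∀ ε ∈ Set.Ioo (0 : ℝ) ε₀, Function.Bijective (L ε))
    -- Riesz number one: N(L(0)²) = N(L(0))
    (hRiesz : LinearMap.ker ((L 0).comp (L 0) : X →ₗ[ℂ] X) = LinearMap.ker (L 0 : X →ₗ[ℂ] X))
    -- f(ε) ∈ R(L(ε))
    (hfran : ∀ ε ∈ Set.Ico (0 : ℝ) ε₀, f ε ∈ LinearMap.range (L ε : X →ₗ[ℂ] X))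
    -- P is the projection onto N(L(0)) along R(L(0))
    (P : X →L[ℂ] X)
    (hPN : ∀ x, P x ∈ LinearMap.ker (L 0 : X →ₗ[ℂ] X))
    (hPid : ∀ x ∈ LinearMap.ker (L 0 : X →ₗ[ℂ] X), P x = x)
    (hPR : ∀ x ∈ LinearMap.range (L 0 : X →ₗ[ℂ] X), P x = 0)
    -- PL'(0)|_N is an isomorphism of N(L(0))
    (hiso : ∀ y ∈ LinearMap.ker (L 0 : X →ₗ[ℂ] X),
      ∃! x, x ∈ LinearMap.ker (L 0 : X →ₗ[ℂ] X) ∧ P (L' 0 x) = y) :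
    ∃ v : ℝ → X, ContinuousOn v (Set.Ico 0 ε₀) ∧
      (∀ ε ∈ Set.Ioo (0 : ℝ) ε₀, L ε (v ε) = f ε) ∧
      L 0 (v 0) = f 0 ∧ P (L' 0 (v 0)) = P (f' 0) ∧
      ∀ w : X, L 0 w = f 0 → P (L' 0 w) = P (f' 0) → w = v 0 := by
  have h0 : (0 : ℝ) ∈ Ico 0 ε₀ := ⟨le_rfl, hε₀⟩
  obtain ⟨hNfin, hRclosed, hQfin⟩ := hFred 0 h0
  have hL : ContinuousOn L (Ico 0 ε₀) := fun ε hε => (hLderiv ε hε).continuousWithinAt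
  have hLu : ∀ ε ∈ Ioo 0 ε₀, IsUnit (L ε) := fun ε hε =>
    ContinuousLinearMap.isUnit_iff_bijective.2 (hinv ε hε)
  have hL0 : L 0 ∈ closure {S | IsUnit S} := closure_mono
    (image_subset_iff.2 hLu : L '' Ioo 0 ε₀ ⊆ {S | IsUnit S}) <|
    ((hL 0 h0).mono Ioo_subset_Ico_self).mem_closure_image
      (by rw [closure_Ioo hε₀.ne]; exact ⟨le_rfl, hε₀.le⟩)
  have hdisj := LinearMap.disjoint_ker_range_of_ker_comp_self hRiesz
  have hcompl := Submodule.isCompl_of_disjoint_of_finrank_quotient_le hdisj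
    ((L 0).finrank_quotient_range_le_finrank_ker_of_mem_closure_isUnit hRclosed hL0)
  have hM0 := LinearMap.bijective_add_comp hcompl hPN hiso
  have hP : IsIdempotentElem P := ContinuousLinearMap.ext fun x => hPid _ (hPN x)
  have hPL : P * L 0 = 0 := ContinuousLinearMap.ext fun x => hPR _ ⟨x, rfl⟩
  obtain ⟨v, hv, hvε, hv0⟩ := exists_continuousOn_solution_of_isUnit h0 hL (hLderiv 0 h0)
    (fun ε hε => (hfderiv ε hε).continuousWithinAt) (hfderiv 0 h0) hP hPL (hPR _ (hfran 0 h0))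
    (fun ε hε hε0 => hLu ε ⟨hε.1.lt_of_ne' hε0, hε.2⟩)
    (ContinuousLinearMap.isUnit_iff_bijective.2 hM0)
  have hsystem : ∀ w, L 0 w + P (L' 0 w) = f 0 + P (f' 0) ↔
      L 0 w = f 0 ∧ P (L' 0 w) = P (f' 0) := fun w =>
    LinearMap.apply_add_apply_eq_add_apply_iff hdisj hPN (hfran 0 h0)
  obtain ⟨hv01, hv02⟩ := (hsystem (v 0)).1 hv0
  exact ⟨v, hv, fun ε hε => hvε ε ⟨hε.1.le, hε.2⟩ hε.1.ne', hv01, hv02,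
    fun w hw1 hw2 => hM0.1 (((hsystem w).2 ⟨hw1, hw2⟩).trans hv0.symm)⟩

/-- the abstract singular perturbation lemma underlying the
limiting absorption principle.  With `L(ε)` a C¹ family of Fredholm operators,
invertible for `ε ∈ (0,ε₀)`, `L(0)` of Riesz number one, `f(ε) ∈ R(L(ε))` a C¹
family, `P` the projection onto `N = N(L(0))` along `R(L(0))`, and `PL'(0)|_N`
an isomorphism of `N`, the solutions `v(ε) = L(ε)⁻¹f(ε)` extend continuously to
`ε = 0` and `v(0)` is the unique solution of `L(0)v = f(0)`,
`PL'(0)v = Pf'(0)`. -/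
theorem singular_perturbation_lemma
    {X : Type*} [NormedAddCommGroup X] [InnerProductSpace ℂ X] [CompleteSpace X]
    (ε₀ : ℝ) (hε₀ : 0 < ε₀)
    (L L' : ℝ → X →L[ℂ] X) (f f' : ℝ → X)
    -- continuous differentiability on [0, ε₀)
    (hLderiv : ∀ ε ∈ Set.Ico (0 : ℝ) ε₀, HasDerivWithinAt L (L' ε) (Set.Ico 0 ε₀) ε)
    (hL'cont : ContinuousOn L' (Set.Ico 0 ε₀))
    (hfderiv : ∀ ε ∈ Set.Ico (0 : ℝ) ε₀, HasDerivWithinAt f (f' ε) (Set.Ico 0 ε₀) ε)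
    (hf'cont : ContinuousOn f' (Set.Ico 0 ε₀))
    -- each L(ε) is Fredholm
    (hFred : ∀ ε ∈ Set.Ico (0 : ℝ) ε₀,
      FiniteDimensional ℂ (LinearMap.ker (L ε : X →ₗ[ℂ] X)) ∧
      IsClosed (LinearMap.range (L ε : X →ₗ[ℂ] X) : Set X) ∧
      FiniteDimensional ℂ (X ⧸ LinearMap.range ((L ε) : X →ₗ[ℂ] X)))
    -- invertibility for ε ∈ (0, ε₀)
    (hinv : ∀ ε ∈ Set.Ioo (0 : ℝ) ε₀, Function.Bijective (L ε))
    -- Riesz number one: N(L(0)²) = N(L(0))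
    (hRiesz : LinearMap.ker ((L 0).comp (L 0) : X →ₗ[ℂ] X) = LinearMap.ker (L 0 : X →ₗ[ℂ] X))
    -- f(ε) ∈ R(L(ε))
    (hfran : ∀ ε ∈ Set.Ico (0 : ℝ) ε₀, f ε ∈ LinearMap.range (L ε : X →ₗ[ℂ] X))
    -- P is the projection onto N(L(0)) along R(L(0))
    (P : X →L[ℂ] X)
    (hPN : ∀ x, P x ∈ LinearMap.ker (L 0 : X →ₗ[ℂ] X))
    (hPid : ∀ x ∈ LinearMap.ker (L 0 : X →ₗ[ℂ] X), P x = x)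
    (hPR : ∀ x ∈ LinearMap.range (L 0 : X →ₗ[ℂ] X), P x = 0)
    -- PL'(0)|_N is an isomorphism of N(L(0))
    (hiso : ∀ y ∈ LinearMap.ker (L 0 : X →ₗ[ℂ] X),
      ∃! x, x ∈ LinearMap.ker (L 0 : X →ₗ[ℂ] X) ∧ P (L' 0 x) = y) :
    ∃ v : ℝ → X, ContinuousOn v (Set.Ico 0 ε₀) ∧
      (∀ ε ∈ Set.Ioo (0 : ℝ) ε₀, L ε (v ε) = f ε) ∧
      L 0 (v 0) = f 0 ∧ P (L' 0 (v 0)) = P (f' 0) ∧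
      ∀ w : X, L 0 w = f 0 → P (L' 0 w) = P (f' 0) → w = v 0 :=
  singular_perturbation_lemma_general ε₀ hε₀ L L' f f' hLderiv hfderiv hFred hinv hRiesz hfran P hPN
    hPid hPR hiso
end

section
/- Let H be a Hilbert space and A, B, C : H → H bounded self-adjoint operators with A non-negative and C positive definite. Let k > 0 and v ∈ H satisfy Av − kBv − k²Cv = 0, and suppose ⟨(B + 2kC)v, ψ⟩ = 0 holds for all ψ in the subspace {ψ : Aψ − kBψ − k²Cψ = 0} containing v. Then ⟨Av + k²Cv, v⟩ = 0 and hence v = 0. -/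
open scoped InnerProductSpace

/-- the Maxwell-case injectivity argument.  With `A` non-negative
self-adjoint, `C` positive definite self-adjoint, `B` self-adjoint, `k > 0`,
`Av − kBv − k²Cv = 0`, and `⟨(B + 2kC)v, ψ⟩ = 0` for every `ψ` in the kernel of
the pencil (which contains `v`), one obtains `⟨Av,v⟩ + k²⟨Cv,v⟩ = 0` and hence
`v = 0`. -/
theorem maxwell_injectivity_core
    {H : Type*} [NormedAddCommGroup H] [InnerProductSpace ℂ H] [CompleteSpace H]
    (A B C : H →L[ℂ] H)
    (hA : IsSelfAdjoint A) (hB : IsSelfAdjoint B) (hC : IsSelfAdjoint C)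
    (hAnonneg : ∀ w : H, 0 ≤ (⟪A w, w⟫_ℂ).re)
    (hCpos : ∀ w : H, w ≠ 0 → 0 < (⟪C w, w⟫_ℂ).re)
    (k : ℝ) (hk : 0 < k)
    (v : H) (hv : A v - (k : ℂ) • B v - ((k : ℂ) ^ 2) • C v = 0)
    (horth : ∀ ψ : H, A ψ - (k : ℂ) • B ψ - ((k : ℂ) ^ 2) • C ψ = 0 →
      ⟪B v + (2 * (k : ℂ)) • C v, ψ⟫_ℂ = 0) :
    ⟪A v, v⟫_ℂ + (k : ℂ) ^ 2 * ⟪C v, v⟫_ℂ = 0 ∧ v = 0 := by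
  have h1 : ⟪B v + (2 * (k : ℂ)) • C v, v⟫_ℂ = 0 := horth v hv
  have hAv : A v = (k : ℂ) • B v + ((k : ℂ) ^ 2) • C v := by
    have := hv; rw [sub_sub, sub_eq_zero] at this; exact this
  have hBv : ⟪B v, v⟫_ℂ = -(2 * (k : ℂ)) * ⟪C v, v⟫_ℂ := by
    rw [inner_add_left, inner_smul_left] at h1
    have : (starRingEnd ℂ) (2 * (k : ℂ)) = 2 * (k : ℂ) := by
      rw [map_mul, Complex.conj_ofReal, map_ofNat]
    rw [this] at h1
    linear_combination h1
  have key : ⟪A v, v⟫_ℂ + (k : ℂ) ^ 2 * ⟪C v, v⟫_ℂ = 0 := by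
    rw [hAv, inner_add_left, inner_smul_left, inner_smul_left, hBv,
      Complex.conj_ofReal, map_pow, Complex.conj_ofReal]
    ring
  refine ⟨key, ?_⟩
  by_contra hne
  have hre : (⟪A v, v⟫_ℂ).re + k ^ 2 * (⟪C v, v⟫_ℂ).re = 0 := by
    have := congrArg Complex.re key
    simpa [Complex.add_re, Complex.mul_re, Complex.ofReal_re,
      ← Complex.ofReal_pow] using this
  have h2 := hCpos v hne
  have h3 := hAnonneg v
  nlinarith [sq_nonneg k, mul_pos (mul_pos hk hk) h2]
end

section
/- Let k > 0 and α ∈ ℝ² with |n+α| ≠ k for all n ∈ ℤ². For v with Fourier coefficients v_n on the boundary, define ⟨𝒯v, v⟩ := Σ_n (i/β_n)[k²|v_n|² − |α̂_n·v_n|²] where β_n = √(k²−|α_n|²) is real positive for |α_n| < k and i|β_n| for |α_n| > k, α_n = n+α, α̂_n = (α_n,0) ∈ ℝ³, and v_n ∈ ℂ³ with third component zero. Then Im⟨𝒯v,v⟩ = Σ_{|α_n|<k} (1/β_n)[k²|v_n|² − |α̂_n·v_n|²] ≥ 0 and Re⟨𝒯v,v⟩ = Σ_{|α_n|>k} (1/|β_n|)[k²|v_n|²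 − |α̂_n·v_n|²]. -/
open Complex

/-!
Each term `(i / β_n) q_n` is purely imaginary with imaginary part `q_n / β_n` when `|α_n| < k`
(there `β_n > 0`), and real equal to `q_n / |β_n|` when `|α_n| > k` (there `i / β_n = 1 / |β_n|`).
Splitting the absolutely convergent sum into real and imaginary parts gives the two formulas,
and the imaginary part is nonnegative because Cauchy–Schwarz gives
`k² |v_n|² − |α̂_n · v_n|² ≥ (k² − |α_n|²) |v_n|² ≥ 0` for the propagating modes.
-/

theorem norm_ofReal_mul_add_ofReal_mul_sq_le (a b : ℝ) (z w : ℂ) :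
    ‖(a : ℂ) * z + (b : ℂ) * w‖ ^ 2 ≤ (a ^ 2 + b ^ 2) * (‖z‖ ^ 2 + ‖w‖ ^ 2) := by
  have h_tri : ‖(a : ℂ) * z + (b : ℂ) * w‖ ≤ |a| * ‖z‖ + |b| * ‖w‖ := by
    simpa [norm_real] using norm_add_le ((a : ℂ) * z) ((b : ℂ) * w)
  calc ‖(a : ℂ) * z + (b : ℂ) * w‖ ^ 2 ≤ (|a| * ‖z‖ + |b| * ‖w‖) ^ 2 := by gcongr
    _ ≤ (|a| ^ 2 + |b| ^ 2) * (‖z‖ ^ 2 + ‖w‖ ^ 2) := by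
      nlinarith [sq_nonneg (|a| * ‖w‖ - |b| * ‖z‖)]
    _ = (a ^ 2 + b ^ 2) * (‖z‖ ^ 2 + ‖w‖ ^ 2) := by rw [sq_abs, sq_abs]

theorem sub_norm_ofReal_mul_add_ofReal_mul_sq_nonneg {a b k : ℝ} (hab : a ^ 2 + b ^ 2 ≤ k ^ 2)
    (z w : ℂ) : 0 ≤ k ^ 2 * (‖z‖ ^ 2 + ‖w‖ ^ 2) - ‖(a : ℂ) * z + (b : ℂ) * w‖ ^ 2 := by
  have h_cs := norm_ofReal_mul_add_ofReal_mul_sq_le a b z w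
  nlinarith [mul_le_mul_of_nonneg_right hab (by positivity : 0 ≤ ‖z‖ ^ 2 + ‖w‖ ^ 2)]

theorem I_div_I_mul_ofReal (s : ℝ) : I / (I * s) = ((s⁻¹ : ℝ) : ℂ) := by
  rw [div_mul_cancel_left₀ I_ne_zero, ofReal_inv]

/-- At the resonance `N = k²` both sides are `0`, through the junk value `i / (i √0) = i / 0 = 0`. -/
theorem I_div_mul_eq_re_add_im_mul_I (k2 N q : ℝ) :
    I / (if N < k2 then ((√(k2 - N) : ℝ) : ℂ) else I * ((√(N - k2) : ℝ) : ℂ)) * (q : ℂ)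
      = ((if k2 < N then (√(N - k2))⁻¹ * q else 0 : ℝ) : ℂ)
        + ((if N < k2 then (√(k2 - N))⁻¹ * q else 0 : ℝ) : ℂ) * I := by
  rcases lt_trichotomy N k2 with h | rfl | h
  · rw [if_pos h, if_pos h, if_neg h.not_gt]
    push_cast
    ring
  · simp
  · rw [if_neg h.not_gt, if_pos h, if_neg h.not_gt, I_div_I_mul_ofReal]
    push_cast
    ring

theorem calderon_form_re_im_general (k : ℝ) (α : EuclideanSpace ℝ (Fin 2))
    (N2 : ℤ × ℤ → ℝ)
    (hN2 : ∀ n : ℤ × ℤ, N2 n = ((n.1 : ℝ) + α 0) ^ 2 + ((n.2 : ℝ) + α 1) ^ 2)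
    (v : ℤ × ℤ → Fin 3 → ℂ) (hv3 : ∀ n, v n 2 = 0)
    (β : ℤ × ℤ → ℂ)
    (hβ : ∀ n, β n = if N2 n < k ^ 2 then ((Real.sqrt (k ^ 2 - N2 n) : ℝ) : ℂ)
      else Complex.I * ((Real.sqrt (N2 n - k ^ 2) : ℝ) : ℂ))
    (q : ℤ × ℤ → ℝ)
    (hq : ∀ n, q n = k ^ 2 * (∑ i : Fin 3, ‖v n i‖ ^ 2)
      - ‖(((n.1 : ℝ) + α 0 : ℝ) : ℂ) * v n 0
          + (((n.2 : ℝ) + α 1 : ℝ) : ℂ) * v n 1‖ ^ 2)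
    (T : ℤ × ℤ → ℂ)
    (hT : ∀ n, T n = (Complex.I / β n) * ((q n : ℝ) : ℂ))
    (hTsum : Summable fun n => ‖T n‖)
    (f g : ℤ × ℤ → ℝ)
    (hf : ∀ n, f n = if N2 n < k ^ 2 then (Real.sqrt (k ^ 2 - N2 n))⁻¹ * q n else 0)
    (hg : ∀ n, g n = if k ^ 2 < N2 n then (Real.sqrt (N2 n - k ^ 2))⁻¹ * q n else 0) :
    (∑' n, T n).im = ∑' n, f n ∧ 0 ≤ ∑' n, f n ∧ (∑' n, T n).re = ∑' n, g n := by
  have hT_eq : ∀ n, T n = (g n : ℂ) + (f n : ℂ) * I := fun n => by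
    rw [hT, hβ, hf, hg, I_div_mul_eq_re_add_im_mul_I]
  have hq_nonneg : ∀ n, N2 n < k ^ 2 → 0 ≤ q n := fun n h => by
    rw [hq, Fin.sum_univ_three, hv3 n, norm_zero, zero_pow two_ne_zero, add_zero]
    exact sub_norm_ofReal_mul_add_ofReal_mul_sq_nonneg (hN2 n ▸ h.le) _ _
  have hf_nonneg : ∀ n, 0 ≤ f n := fun n => by
    rw [hf]
    split_ifs with h
    exacts [mul_nonneg (inv_nonneg.2 (Real.sqrt_nonneg _)) (hq_nonneg n h), le_rfl]
  have h_im : (∑' n, T n).im = ∑' n, f n := by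
    rw [im_tsum hTsum.of_norm]
    simp [hT_eq]
  refine ⟨h_im, h_im ▸ tsum_nonneg hf_nonneg, ?_⟩
  rw [re_tsum hTsum.of_norm]
  simp [hT_eq]

/-- real and imaginary parts of the electromagnetic Calderon
quadratic form `⟨𝒯v,v⟩ = Σ_n (i/β_n)[k²|v_n|² − |α̂_n·v_n|²]`:
`Im⟨𝒯v,v⟩ = Σ_{|α_n|<k}(1/β_n)[k²|v_n|² − |α̂_n·v_n|²] ≥ 0` and
`Re⟨𝒯v,v⟩ = Σ_{|α_n|>k}(1/|β_n|)[k²|v_n|² − |α̂_n·v_n|²]`. -/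
theorem calderon_form_re_im (k : ℝ) (hk : 0 < k) (α : EuclideanSpace ℝ (Fin 2))
    (N2 : ℤ × ℤ → ℝ)
    (hN2 : ∀ n : ℤ × ℤ, N2 n = ((n.1 : ℝ) + α 0) ^ 2 + ((n.2 : ℝ) + α 1) ^ 2)
    (hne : ∀ n : ℤ × ℤ, N2 n ≠ k ^ 2)
    (v : ℤ × ℤ → Fin 3 → ℂ) (hv3 : ∀ n, v n 2 = 0)
    (β : ℤ × ℤ → ℂ)
    (hβ : ∀ n, β n = if N2 n < k ^ 2 then ((Real.sqrt (k ^ 2 - N2 n) : ℝ) : ℂ)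
      else Complex.I * ((Real.sqrt (N2 n - k ^ 2) : ℝ) : ℂ))
    (q : ℤ × ℤ → ℝ)
    (hq : ∀ n, q n = k ^ 2 * (∑ i : Fin 3, ‖v n i‖ ^ 2)
      - ‖(((n.1 : ℝ) + α 0 : ℝ) : ℂ) * v n 0
          + (((n.2 : ℝ) + α 1 : ℝ) : ℂ) * v n 1‖ ^ 2)
    (T : ℤ × ℤ → ℂ)
    (hT : ∀ n, T n = (Complex.I / β n) * ((q n : ℝ) : ℂ))
    (hTsum : Summable fun n => ‖T n‖)
    (f g : ℤ × ℤ → ℝ)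
    (hf : ∀ n, f n = if N2 n < k ^ 2 then (Real.sqrt (k ^ 2 - N2 n))⁻¹ * q n else 0)
    (hg : ∀ n, g n = if k ^ 2 < N2 n then (Real.sqrt (N2 n - k ^ 2))⁻¹ * q n else 0) :
    (∑' n, T n).im = ∑' n, f n ∧ 0 ≤ ∑' n, f n ∧ (∑' n, T n).re = ∑' n, g n :=
  calderon_form_re_im_general k α N2 hN2 v hv3 β hβ q hq T hT hTsum f g hf hg
end
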